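/- For all parameters A, B, C ∈ ℂ with (C;q)_n ≠ 0 for all n, all y ∈ ℂ with |y| < 1, and all x ∈ ℂ with 0 < |x| < 1, one has (1−B)·Φ₁(A,q₁B;C;q,q₁;x,y) = (1−B)·Φ₁(A,B;C;q,q₁;x,y) + B·(1−q₁)·x·(D_{q₁} f)(x), where f is the function x ↦ Φ₁(A,B;C;q,q₁;x,y) and D_{q₁} is the Jackson q₁-derivative in x. (Equation (2.25).) -/

import Mathlib

/-!
Since `(1 - B) (q₁B; q₁)_ℓ = (B; q₁)_ℓ (1 - B q₁^ℓ)`, multiplying the series of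
`Φ₁(A, q₁B; C; q, q₁; x, y)` by `1 - B` splits it termwise into `Φ₁(x) - B Φ₁(q₁x)`, both series
converging absolutely. The claim follows because `(1 - q₁) x (D_{q₁} f)(x) = f(x) - f(q₁x)`.
The absolute convergence rests on the coefficients of `Φ₁` being bounded: each `q`-shifted
factorial `(z; q)_n` converges, as `n → ∞`, to an infinite product that is nonzero as soon as none
of its factors vanishes.
-/

open Complex

/-- The q-shifted factorial (z;q)_n = prod_{r=0}^{n-1} (1 - z q^r). -/
noncomputable def qPoch (q z : ℂ) (n : ℕ) : ℂ :=
  ∏ r ∈ Finset.range n, (1 - z * q ^ r)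

/-- The bibasic Humbert hypergeometric function Φ₁ on two independent bases q and q₁. -/
noncomputable def Phi1 (q q1 A B C x y : ℂ) : ℂ :=
  ∑' p : ℕ × ℕ,
    qPoch q A (p.1 + p.2) * qPoch q1 B p.1 /
      (qPoch q C (p.1 + p.2) * qPoch q1 q1 p.1 * qPoch q q p.2) * x ^ p.1 * y ^ p.2

/-- The Jackson p-derivative. -/
noncomputable def jackson (p : ℂ) (f : ℂ → ℂ) (x : ℂ) : ℂ :=
  (f x - f (p * x)) / ((1 - p) * x)

open Filter Topology

lemma qPoch_succ (q z : ℂ) (n : ℕ) : qPoch q z (n + 1) = qPoch q z n * (1 - z * q ^ n) :=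
  Finset.prod_range_succ _ _

lemma qPoch_succ' (q z : ℂ) (n : ℕ) : qPoch q z (n + 1) = (1 - z) * qPoch q (q * z) n := by
  simp only [qPoch, Finset.prod_range_succ', pow_succ, pow_zero, mul_one]
  rw [mul_comm]
  congr 1
  exact Finset.prod_congr rfl fun r _ => by ring

lemma one_sub_mul_qPoch_mul_left (q z : ℂ) (n : ℕ) :
    (1 - z) * qPoch q (q * z) n = qPoch q z n * (1 - z * q ^ n) :=
  (qPoch_succ' q z n).symm.trans (qPoch_succ q z n)

lemma one_sub_ne_zero_of_norm_lt_one {R : Type*} [SeminormedRing R] [NormOneClass R] {w : R}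
    (hw : ‖w‖ < 1) : 1 - w ≠ 0 := by
  rintro h
  rw [← sub_eq_zero.1 h, norm_one] at hw
  exact hw.false

lemma qPoch_self_ne_zero {q : ℂ} (hq : ‖q‖ < 1) (n : ℕ) : qPoch q q n ≠ 0 :=
  Finset.prod_ne_zero_iff.2 fun r _ => one_sub_ne_zero_of_norm_lt_one <| by
    rw [← pow_succ', norm_pow]
    exact pow_lt_one₀ (norm_nonneg q) hq r.succ_ne_zero

section Convergence

variable {q : ℂ} (hq : ‖q‖ < 1)
include hq

lemma summable_norm_neg_mul_pow (z : ℂ) : Summable fun r : ℕ => ‖-(z * q ^ r)‖ := by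
  simpa [norm_mul, norm_pow] using (summable_geometric_of_lt_one (norm_nonneg q) hq).mul_left ‖z‖

lemma tendsto_qPoch (z : ℂ) :
    Tendsto (qPoch q z) atTop (𝓝 (∏' r : ℕ, (1 - z * q ^ r))) := by
  have h :=
    (multipliable_one_add_of_summable (summable_norm_neg_mul_pow hq z)).tendsto_prod_tprod_nat
  simp only [← sub_eq_add_neg] at h
  exact h

lemma tprod_one_sub_mul_pow_ne_zero {z : ℂ} (hz : ∀ n, qPoch q z n ≠ 0) :
    ∏' r : ℕ, (1 - z * q ^ r) ≠ 0 := by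
  have hfactor (r : ℕ) : 1 + -(z * q ^ r) ≠ 0 := by
    rw [← sub_eq_add_neg]
    exact right_ne_zero_of_mul (qPoch_succ q z r ▸ hz (r + 1))
  simpa [← sub_eq_add_neg] using
    tprod_one_add_ne_zero_of_summable hfactor (summable_norm_neg_mul_pow hq z)

lemma exists_norm_qPoch_le (z : ℂ) : ∃ M, ∀ n, ‖qPoch q z n‖ ≤ M :=
  (isBounded_iff_forall_norm_le.1 (Metric.isBounded_range_of_tendsto _ (tendsto_qPoch hq z))).imp
    fun _ hM n => hM _ ⟨n, rfl⟩

lemma exists_norm_inv_qPoch_le {z : ℂ} (hz : ∀ n, qPoch q z n ≠ 0) :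
    ∃ M, ∀ n, ‖(qPoch q z n)⁻¹‖ ≤ M :=
  (isBounded_iff_forall_norm_le.1 (Metric.isBounded_range_of_tendsto _
    ((tendsto_qPoch hq z).inv₀ (tprod_one_sub_mul_pow_ne_zero hq hz)))).imp
    fun _ hM n => hM _ ⟨n, rfl⟩

end Convergence

lemma summable_mul_pow_mul_pow {𝕜 : Type*} [NormedField 𝕜] [CompleteSpace 𝕜] {c : ℕ × ℕ → 𝕜}
    {M : ℝ} (hc : ∀ p, ‖c p‖ ≤ M) {x y : 𝕜} (hx : ‖x‖ < 1) (hy : ‖y‖ < 1) :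
    Summable fun p : ℕ × ℕ => c p * x ^ p.1 * y ^ p.2 := by
  have hgeom : Summable fun p : ℕ × ℕ => M * (‖x‖ ^ p.1 * ‖y‖ ^ p.2) :=
    ((summable_geometric_of_lt_one (norm_nonneg x) hx).mul_of_nonneg
      (summable_geometric_of_lt_one (norm_nonneg y) hy) (fun _ => by positivity)
      (fun _ => by positivity)).mul_left M
  refine hgeom.of_norm_bounded fun p => ?_
  rw [norm_mul, norm_mul, norm_pow, norm_pow, mul_assoc]
  gcongr
  exact hc p

noncomputable def Phi1Coeff (q q1 A B C : ℂ) (p : ℕ × ℕ) : ℂ :=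
  qPoch q A (p.1 + p.2) * qPoch q1 B p.1 /
    (qPoch q C (p.1 + p.2) * qPoch q1 q1 p.1 * qPoch q q p.2)

lemma Phi1_eq_tsum (q q1 A B C x y : ℂ) :
    Phi1 q q1 A B C x y = ∑' p : ℕ × ℕ, Phi1Coeff q q1 A B C p * x ^ p.1 * y ^ p.2 :=
  rfl

lemma exists_norm_Phi1Coeff_le {q q1 C : ℂ} (hq : ‖q‖ < 1) (hq1 : ‖q1‖ < 1)
    (hC : ∀ n, qPoch q C n ≠ 0) (A B : ℂ) : ∃ M, ∀ p, ‖Phi1Coeff q q1 A B C p‖ ≤ M := by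
  obtain ⟨MA, hMA⟩ := exists_norm_qPoch_le hq A
  obtain ⟨MB, hMB⟩ := exists_norm_qPoch_le hq1 B
  obtain ⟨MC, hMC⟩ := exists_norm_inv_qPoch_le hq hC
  obtain ⟨M1, hM1⟩ := exists_norm_inv_qPoch_le hq1 (qPoch_self_ne_zero hq1)
  obtain ⟨Mq, hMq⟩ := exists_norm_inv_qPoch_le hq (qPoch_self_ne_zero hq)
  have hMA0 : 0 ≤ MA := (norm_nonneg _).trans (hMA 0)
  have hMB0 : 0 ≤ MB := (norm_nonneg _).trans (hMB 0)
  have hMC0 : 0 ≤ MC := (norm_nonneg _).trans (hMC 0)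
  have hM10 : 0 ≤ M1 := (norm_nonneg _).trans (hM1 0)
  refine ⟨MA * MB * (MC * M1 * Mq), fun p => ?_⟩
  rw [Phi1Coeff, div_eq_mul_inv, mul_inv, mul_inv]
  simp only [norm_mul]
  gcongr
  exacts [hMA _, hMB _, hMC _, hM1 _, hMq _]

lemma summable_Phi1 {q q1 C x y : ℂ} (hq : ‖q‖ < 1) (hq1 : ‖q1‖ < 1)
    (hC : ∀ n, qPoch q C n ≠ 0) (hx : ‖x‖ < 1) (hy : ‖y‖ < 1) (A B : ℂ) :
    Summable fun p : ℕ × ℕ => Phi1Coeff q q1 A B C p * x ^ p.1 * y ^ p.2 :=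
  (exists_norm_Phi1Coeff_le hq hq1 hC A B).elim fun _ hM => summable_mul_pow_mul_pow hM hx hy

lemma one_sub_mul_Phi1Coeff_mul_left (q q1 A B C : ℂ) (p : ℕ × ℕ) :
    (1 - B) * Phi1Coeff q q1 A (q1 * B) C p = Phi1Coeff q q1 A B C p * (1 - B * q1 ^ p.1) := by
  unfold Phi1Coeff
  linear_combination qPoch q A (p.1 + p.2) /
    (qPoch q C (p.1 + p.2) * qPoch q1 q1 p.1 * qPoch q q p.2) * one_sub_mul_qPoch_mul_left q1 B p.1

theorem one_sub_mul_Phi1_mul_left {q q1 C x y : ℂ} (hq : ‖q‖ < 1) (hq1 : ‖q1‖ < 1)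
    (hC : ∀ n, qPoch q C n ≠ 0) (hx : ‖x‖ < 1) (hy : ‖y‖ < 1) (A B : ℂ) :
    (1 - B) * Phi1 q q1 A (q1 * B) C x y =
      Phi1 q q1 A B C x y - B * Phi1 q q1 A B C (q1 * x) y := by
  have hq1x : ‖q1 * x‖ < 1 := by
    rw [norm_mul]
    exact (mul_le_of_le_one_left (norm_nonneg x) hq1.le).trans_lt hx
  simp only [Phi1_eq_tsum]
  rw [← tsum_mul_left, ← tsum_mul_left, ← (summable_Phi1 hq hq1 hC hx hy A B).tsum_sub
    ((summable_Phi1 hq hq1 hC hq1x hy A B).mul_left B)]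
  refine tsum_congr fun p => ?_
  linear_combination x ^ p.1 * y ^ p.2 * one_sub_mul_Phi1Coeff_mul_left q q1 A B C p

lemma one_sub_mul_mul_jackson (p : ℂ) (f : ℂ → ℂ) (x : ℂ) :
    (1 - p) * x * jackson p f x = f x - f (p * x) := by
  rcases eq_or_ne ((1 - p) * x) 0 with h | h
  · rcases mul_eq_zero.1 h with hp | rfl
    · obtain rfl : p = 1 := (sub_eq_zero.1 hp).symm
      simp
    · simp
  · exact mul_div_cancel₀ _ h

theorem stmt18_general (q q1 A B C x y : ℂ)
    (hq1 : ‖q‖ < 1)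
    (hq11 : ‖q1‖ < 1)
    (hC : ∀ n : ℕ, qPoch q C n ≠ 0)
    (hx : ‖x‖ < 1) (hy : ‖y‖ < 1) :
    (1 - B) * Phi1 q q1 A (q1 * B) C x y =
      (1 - B) * Phi1 q q1 A B C x y
        + B * (1 - q1) * x * jackson q1 (fun t => Phi1 q q1 A B C t y) x := by
  rw [one_sub_mul_Phi1_mul_left hq1 hq11 hC hx hy]
  linear_combination -B * one_sub_mul_mul_jackson q1 (fun t => Phi1 q q1 A B C t y) x

theorem stmt18 (q q1 A B C x y : ℂ)
    (hq0 : 0 < ‖q‖) (hq1 : ‖q‖ < 1)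
    (hq10 : 0 < ‖q1‖) (hq11 : ‖q1‖ < 1)
    (hC : ∀ n : ℕ, qPoch q C n ≠ 0)
    (hx0 : 0 < ‖x‖) (hx : ‖x‖ < 1) (hy : ‖y‖ < 1) :
    (1 - B) * Phi1 q q1 A (q1 * B) C x y =
      (1 - B) * Phi1 q q1 A B C x y
        + B * (1 - q1) * x * jackson q1 (fun t => Phi1 q q1 A B C t y) x :=
  stmt18_general q q1 A B C x y hq1 hq11 hC hx hy
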